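/- (Proposition 1) The fix-up phase of the insertion algorithm for 2-3 red-black trees terminates: starting from the tree obtained by inserting a new red leaf into a 2-3 red-black tree, each application of a fix-up rule moves the marked violating node strictly closer to the root, hence the number of fix-up rule applications is at most the height of the tree; after the fix-up phase and recoloring the root black, the resulting tree is a valid 2-3 red-black tree whose key set is the original key set together with the inserted key. -/

import Mathlib

inductive Color where
  | red : Color
  | black : Color
deriving DecidableEq

inductive RBTree (α : Type) where
  | nil : RBTree α
  | node : Color → RBTree α → α → RBTree α → RBTree α

namespace RBTree

variable {α : Type}

/-- The color of a tree's root; external (nil) positions count as black. -/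
def color : RBTree α → Color
  | .nil => Color.black
  | .node c _ _ _ => c

/-- Inorder traversal of the keys. -/
def inorder : RBTree α → List α
  | .nil => []
  | .node _ l k r => inorder l ++ k :: inorder r

/-- `BH t n`: every path from the root of `t` to an external node contains
exactly `n` black nodes (property (3)). -/
inductive BH : RBTree α → ℕ → Prop where
  | nil : BH RBTree.nil 0
  | red {l r : RBTree α} {k : α} {n : ℕ} :
      BH l n → BH r n → BH (RBTree.node Color.red l k r) n
  | black {l r : RBTree α} {k : α} {n : ℕ} :
      BH l n → BH r n → BH (RBTree.node Color.black l k r) (n + 1)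

/-- Property (2): every red node has black children (equivalently, a red node
never has a red parent). -/
def NoRedRed : RBTree α → Prop
  | .nil => True
  | .node c l _ r =>
      (c = Color.red → color l = Color.black ∧ color r = Color.black) ∧
      NoRedRed l ∧ NoRedRed r

/-- The 2-3 condition: no node has two red children. -/
def No2Red : RBTree α → Prop
  | .nil => True
  | .node _ l _ r =>
      ¬(color l = Color.red ∧ color r = Color.red) ∧ No2Red l ∧ No2Red r

/-- A red-black tree: black root, no red-red violation, uniform black counts. -/
def IsRB (t : RBTree α) : Prop :=
  color t = Color.black ∧ NoRedRed t ∧ ∃ n, BH t n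

/-- A 2-3 red-black tree: a red-black tree where no node has two red children. -/
def Is23RB (t : RBTree α) : Prop := IsRB t ∧ No2Red t

/-- Recolor the root black. -/
def setBlack : RBTree α → RBTree α
  | .nil => .nil
  | .node _ l k r => .node Color.black l k r

/-- `Occurs s t`: `s` occurs as a subtree of `t`. -/
inductive Occurs : RBTree α → RBTree α → Prop where
  | refl (t : RBTree α) : Occurs t t
  | left {s l : RBTree α} (c : Color) (k : α) (r : RBTree α) :
      Occurs s l → Occurs s (RBTree.node c l k r)
  | right {s r : RBTree α} (c : Color) (k : α) (l : RBTree α) :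
      Occurs s r → Occurs s (RBTree.node c l k r)

/-- `Replace s s' t t'`: `t'` is obtained from `t` by replacing one
occurrence of the subtree `s` by `s'`. -/
inductive Replace (s s' : RBTree α) : RBTree α → RBTree α → Prop where
  | here : Replace s s' s s'
  | left {l l' : RBTree α} (c : Color) (k : α) (r : RBTree α) :
      Replace s s' l l' → Replace s s' (RBTree.node c l k r) (RBTree.node c l' k r)
  | right {r r' : RBTree α} (c : Color) (k : α) (l : RBTree α) :
      Replace s s' r r' → Replace s s' (RBTree.node c l k r) (RBTree.node c l k r')

/-- The list of black-node counts along all root-to-external paths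
(in left-to-right order of the external nodes). -/
def bpaths : RBTree α → List ℕ
  | .nil => [0]
  | .node c l _ r =>
      (bpaths l ++ bpaths r).map (fun m => m + if c = Color.black then 1 else 0)

/-- Height: the maximum number of edges on a path from the root to an external node. -/
def height : RBTree α → ℕ
  | .nil => 0
  | .node _ l _ r => max (height l) (height r) + 1

/-- Number of internal nodes. -/
def size : RBTree α → ℕ
  | .nil => 0
  | .node _ l _ r => size l + size r + 1

end RBTree

namespace RBTree

variable {α : Type}

/-- Fix-up at a black node whose left subtree was just rebuilt by insertion.
Returns the fixed subtree together with the number of fix-up rule applications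
(color flip or rotation) performed here (`0` or `1`).
Rule (ii): if both children are red, recolor the children black and this node red.
Rule (i): if the left child and one of its children are red (with black sibling),
perform the single or double rotation with recoloring. -/
def insFixL : RBTree α → α → RBTree α → RBTree α × ℕ
  | l, k, r =>
    if color l = Color.red ∧ color r = Color.red then
      (RBTree.node Color.red (setBlack l) k (setBlack r), 1)
    else
      match l, k, r with
      | RBTree.node Color.red (RBTree.node Color.red a kx b) kp c, kg, d =>
          (RBTree.node Color.red (RBTree.node Color.black a kx b) kp
            (RBTree.node Color.black c kg d), 1)
      | RBTree.node Color.red a kp (RBTree.node Color.red b kx c), kg, d =>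
          (RBTree.node Color.red (RBTree.node Color.black a kp b) kx
            (RBTree.node Color.black c kg d), 1)
      | l, kg, r => (RBTree.node Color.black l kg r, 0)

/-- Fix-up at a black node whose right subtree was just rebuilt by insertion
(mirror image of `insFixL`). -/
def insFixR : RBTree α → α → RBTree α → RBTree α × ℕ
  | l, k, r =>
    if color l = Color.red ∧ color r = Color.red then
      (RBTree.node Color.red (setBlack l) k (setBlack r), 1)
    else
      match l, k, r with
      | a, kg, RBTree.node Color.red b kp (RBTree.node Color.red c kx d) =>
          (RBTree.node Color.red (RBTree.node Color.black a kg b) kp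
            (RBTree.node Color.black c kx d), 1)
      | a, kg, RBTree.node Color.red (RBTree.node Color.red b kx c) kp d =>
          (RBTree.node Color.red (RBTree.node Color.black a kg b) kx
            (RBTree.node Color.black c kp d), 1)
      | l, kg, r => (RBTree.node Color.black l kg r, 0)

/-- Insertion into a 2-3 red-black tree: place the new key in a red leaf at
the position dictated by binary-search-tree order and apply the fix-up rules
bottom-up along the insertion path.  Returns the resulting tree together with
the total number of fix-up rule applications. -/
def insAux [LinearOrder α] (k : α) : RBTree α → RBTree α × ℕ
  | .nil => (RBTree.node Color.red RBTree.nil k RBTree.nil, 0)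
  | .node Color.black l x r =>
      if k < x then
        let p := insAux k l
        let q := insFixL p.1 x r
        (q.1, p.2 + q.2)
      else if x < k then
        let p := insAux k r
        let q := insFixR l x p.1
        (q.1, p.2 + q.2)
      else (RBTree.node Color.black l x r, 0)
  | .node Color.red l x r =>
      if k < x then
        let p := insAux k l
        (RBTree.node Color.red p.1 x r, p.2)
      else if x < k then
        let p := insAux k r
        (RBTree.node Color.red l x p.1, p.2)
      else (RBTree.node Color.red l x r, 0)

/-- The insertion algorithm: insert, fix up, and finally recolor the root black. -/
def insert [LinearOrder α] (k : α) (t : RBTree α) : RBTree α :=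
  setBlack (insAux k t).1

/-- The number of fix-up rule applications performed while inserting `k`. -/
def insertFixupCount [LinearOrder α] (k : α) (t : RBTree α) : ℕ :=
  (insAux k t).2

end RBTree

/-!
Insertion returns every subtree on the insertion path either valid or with a single defect: a
red root with one red child (`NearlyValid`). The black parent above such a subtree removes the
defect with one rule application — a color flip when its other child is red, a single or double
rotation otherwise — possibly recreating it one level higher with itself as the red root. So at
most one rule fires per level of the path, and recoloring the final root black removes the last
possible defect. Every rule keeps the inorder sequence and the black counts. The right-hand
fix-up is the mirror image of the left-hand one, so the case analysis is needed only once.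
-/

namespace RBTree

variable {α : Type}

/-- The invariants of a 2-3 red-black tree of black-height `n`, without the condition on the
color of the root, so that they pass to subtrees. -/
def Valid (t : RBTree α) (n : ℕ) : Prop := NoRedRed t ∧ No2Red t ∧ BH t n

/-- What insertion may leave behind before its fix-up: a red root is allowed one red child. -/
def NearlyValid : RBTree α → ℕ → Prop
  | .node .red l _ r, n => Valid l n ∧ Valid r n ∧ ¬(color l = .red ∧ color r = .red)
  | t, n => Valid t n

def mirror : RBTree α → RBTree α
  | .nil => .nil
  | .node c l k r => .node c (mirror r) k (mirror l)

section Basic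

variable {t l r : RBTree α} {k : α} {n : ℕ}

@[simp] lemma color_setBlack (t : RBTree α) : color (setBlack t) = .black := by
  cases t <;> rfl

@[simp] lemma inorder_setBlack (t : RBTree α) : inorder (setBlack t) = inorder t := by
  cases t <;> rfl

lemma Valid.node_red (hl : Valid l n) (hr : Valid r n) (hcl : color l = .black)
    (hcr : color r = .black) : Valid (.node .red l k r) n :=
  ⟨⟨fun _ => ⟨hcl, hcr⟩, hl.1, hr.1⟩, ⟨by simp [hcl], hl.2.1, hr.2.1⟩, .red hl.2.2 hr.2.2⟩

lemma Valid.node_black (hl : Valid l n) (hr : Valid r n)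
    (h : ¬(color l = .red ∧ color r = .red)) : Valid (.node .black l k r) (n + 1) :=
  ⟨⟨nofun, hl.1, hr.1⟩, ⟨h, hl.2.1, hr.2.1⟩, .black hl.2.2 hr.2.2⟩

lemma Valid.of_node_red (h : Valid (.node .red l k r) n) :
    Valid l n ∧ Valid r n ∧ color l = .black ∧ color r = .black := by
  obtain ⟨⟨hc, hnl, hnr⟩, ⟨-, h2l, h2r⟩, hb⟩ := h
  cases hb with
  | red hbl hbr => exact ⟨⟨hnl, h2l, hbl⟩, ⟨hnr, h2r, hbr⟩, hc rfl⟩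

lemma Valid.of_node_black (h : Valid (.node .black l k r) n) :
    ∃ m, n = m + 1 ∧ Valid l m ∧ Valid r m := by
  obtain ⟨⟨-, hnl, hnr⟩, ⟨-, h2l, h2r⟩, hb⟩ := h
  cases hb with
  | black hbl hbr => exact ⟨_, rfl, ⟨hnl, h2l, hbl⟩, ⟨hnr, h2r, hbr⟩⟩

lemma Valid.nearlyValid (h : Valid t n) : NearlyValid t n := by
  match t, h with
  | .nil, h => exact h
  | .node .black _ _ _, h => exact h
  | .node .red _ _ _, h =>
    obtain ⟨hl, hr, hcl, -⟩ := h.of_node_red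
    exact ⟨hl, hr, by simp [hcl]⟩

lemma NearlyValid.valid_setBlack (h : NearlyValid t n) (hc : color t = .red) :
    Valid (setBlack t) (n + 1) := by
  match t, h with
  | .node .red _ _ _, ⟨hl, hr, h⟩ => exact hl.node_black hr h

lemma Valid.is23RB (h : Valid t n) (hc : color t = .black) : Is23RB t :=
  ⟨⟨hc, h.1, n, h.2.2⟩, h.2.1⟩

lemma Valid.is23RB_setBlack (h : Valid t n) : Is23RB (setBlack t) := by
  match t, h with
  | .nil, h => exact h.is23RB rfl
  | .node .black _ _ _, h => exact h.is23RB rfl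
  | .node .red _ _ _, h => exact (h.nearlyValid.valid_setBlack rfl).is23RB rfl

end Basic

section Mirror

variable {t : RBTree α} {n : ℕ}

@[simp] lemma mirror_mirror (t : RBTree α) : mirror (mirror t) = t := by
  induction t with
  | nil => rfl
  | node c l k r ihl ihr => simp [mirror, ihl, ihr]

@[simp] lemma color_mirror (t : RBTree α) : color (mirror t) = color t := by
  cases t <;> rfl

@[simp] lemma inorder_mirror (t : RBTree α) : inorder (mirror t) = (inorder t).reverse := by
  induction t with
  | nil => rfl
  | node c l k r ihl ihr => simp [mirror, inorder, ihl, ihr]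

lemma NoRedRed.mirror (h : NoRedRed t) : NoRedRed (mirror t) := by
  induction t with
  | nil => trivial
  | node c l k r ihl ihr =>
    obtain ⟨hc, hl, hr⟩ := h
    exact ⟨fun hred => by simpa using (hc hred).symm, ihr hr, ihl hl⟩

lemma No2Red.mirror (h : No2Red t) : No2Red (mirror t) := by
  induction t with
  | nil => trivial
  | node c l k r ihl ihr =>
    obtain ⟨hc, hl, hr⟩ := h
    exact ⟨by simpa [and_comm] using hc, ihr hr, ihl hl⟩

lemma BH.mirror (h : BH t n) : BH (mirror t) n := by
  induction h with
  | nil => exact .nil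
  | red _ _ ihl ihr => exact .red ihr ihl
  | black _ _ ihl ihr => exact .black ihr ihl

lemma Valid.mirror (h : Valid t n) : Valid (mirror t) n :=
  ⟨h.1.mirror, h.2.1.mirror, h.2.2.mirror⟩

lemma NearlyValid.mirror (h : NearlyValid t n) : NearlyValid (mirror t) n := by
  match t, h with
  | .nil, h => exact Valid.mirror h
  | .node .black _ _ _, h => exact Valid.mirror h
  | .node .red _ _ _, ⟨hl, hr, h⟩ => exact ⟨hr.mirror, hl.mirror, by simpa [and_comm] using h⟩

end Mirror

section FixUp

variable {l r : RBTree α} {k : α} {n : ℕ}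

lemma NearlyValid.valid (h : NearlyValid l n)
    (hleft : ∀ a x b y c, l ≠ .node .red (.node .red a x b) y c)
    (hright : ∀ a y b x c, l ≠ .node .red a y (.node .red b x c)) : Valid l n := by
  match l, h with
  | .nil, h => exact h
  | .node .black _ _ _, h => exact h
  | .node .red a y b, ⟨ha, hb, _⟩ =>
    refine ha.node_red hb ?_ ?_
    · rcases a with _ | ⟨_ | _, a₁, x, a₂⟩
      exacts [rfl, absurd rfl (hleft a₁ x a₂ y b), rfl]
    · rcases b with _ | ⟨_ | _, b₁, x, b₂⟩
      exacts [rfl, absurd rfl (hright a y b₁ x b₂), rfl]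

lemma valid_insFixL (hl : NearlyValid l n) (hr : Valid r n) :
    Valid (insFixL l k r).1 (n + 1) := by
  unfold insFixL
  split
  split
  case isTrue h =>
    exact (hl.valid_setBlack h.1).node_red (hr.nearlyValid.valid_setBlack h.2)
      (color_setBlack l) (color_setBlack r)
  case isFalse h =>
    split
    case h_1 =>
      obtain ⟨hab, hc, hnot⟩ := hl
      obtain ⟨ha, hb, hca, -⟩ := hab.of_node_red
      exact (ha.node_black hb (by simp [hca])).node_red
        (hc.node_black hr fun h' => hnot ⟨rfl, h'.1⟩) rfl rfl
    case h_2 =>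
      obtain ⟨ha, hbc, hnot⟩ := hl
      obtain ⟨hb, hc, hcb, hcc⟩ := hbc.of_node_red
      exact (ha.node_black hb fun h' => hnot ⟨h'.1, rfl⟩).node_red
        (hc.node_black hr (by simp [hcc])) rfl rfl
    case h_3 hleft hright => exact (hl.valid hleft hright).node_black hr h

-- `insFixR` looks two levels into `r` and only at the color of `l`, so these cases suffice.
lemma insFixR_eq_mirror (l : RBTree α) (k : α) (r : RBTree α) :
    insFixR l k r = Prod.map mirror id (insFixL (mirror r) k (mirror l)) := by
  rcases r with _ | ⟨_ | _, _ | ⟨_ | _, _, _, _⟩, _, _ | ⟨_ | _, _, _, _⟩⟩ <;>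
  rcases l with _ | ⟨_ | _, _, _, _⟩ <;>
  simp [insFixL, insFixR, mirror, color, setBlack]

lemma valid_insFixR (hl : Valid l n) (hr : NearlyValid r n) :
    Valid (insFixR l k r).1 (n + 1) := by
  rw [insFixR_eq_mirror]
  exact (valid_insFixL hr.mirror hl.mirror).mirror

lemma inorder_insFixL : inorder (insFixL l k r).1 = inorder l ++ k :: inorder r := by
  unfold insFixL
  split
  split
  · simp [inorder]
  · split <;> simp [inorder]

lemma inorder_insFixR : inorder (insFixR l k r).1 = inorder l ++ k :: inorder r := by
  simp [insFixR_eq_mirror, inorder_insFixL]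

lemma insFixL_count_le_one : (insFixL l k r).2 ≤ 1 := by
  unfold insFixL
  split
  split
  · simp
  · split <;> simp

lemma insFixR_count_le_one : (insFixR l k r).2 ≤ 1 := by
  simpa [insFixR_eq_mirror] using insFixL_count_le_one

end FixUp

section Insert

variable [LinearOrder α] (k : α)

lemma insAux_count_le_height (t : RBTree α) : (insAux k t).2 ≤ height t := by
  induction t with
  | nil => simp [insAux]
  | node c l x r ihl ihr =>
    have := insFixL_count_le_one (l := (insAux k l).1) (k := x) (r := r)
    have := insFixR_count_le_one (l := l) (k := x) (r := (insAux k r).1)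
    cases c <;> simp only [insAux, height] <;> split_ifs <;> omega

lemma mem_inorder_insAux (t : RBTree α) (x : α) :
    x ∈ inorder (insAux k t).1 ↔ x ∈ inorder t ∨ x = k := by
  induction t with
  | nil => simp [insAux, inorder]
  | node c l y r ihl ihr =>
    cases c <;> simp only [insAux] <;> split_ifs
    all_goals
      simp only [inorder_insFixL, inorder_insFixR, inorder, List.mem_append, List.mem_cons,
        ihl, ihr]
      grind

lemma valid_insAux {t : RBTree α} {n : ℕ} (h : Valid t n) :
    NearlyValid (insAux k t).1 n ∧ (color t = .black → Valid (insAux k t).1 n) := by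
  induction t generalizing n with
  | nil =>
    obtain ⟨-, -, ⟨⟩⟩ := h
    have hleaf : Valid (.node .red .nil k .nil) 0 :=
      Valid.node_red ⟨trivial, trivial, .nil⟩ ⟨trivial, trivial, .nil⟩ rfl rfl
    exact ⟨hleaf.nearlyValid, fun _ => hleaf⟩
  | node c l y r ihl ihr =>
    cases c with
    | black =>
      obtain ⟨m, rfl, hl, hr⟩ := h.of_node_black
      simp only [insAux]
      split_ifs
      · have h' := valid_insFixL (k := y) (ihl hl).1 hr
        exact ⟨h'.nearlyValid, fun _ => h'⟩
      · have h' := valid_insFixR (k := y) hl (ihr hr).1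
        exact ⟨h'.nearlyValid, fun _ => h'⟩
      · exact ⟨h.nearlyValid, fun _ => h⟩
    | red =>
      obtain ⟨hl, hr, hcl, hcr⟩ := h.of_node_red
      simp only [insAux]
      split_ifs
      · exact ⟨⟨(ihl hl).2 hcl, hr, by simp [hcr]⟩, nofun⟩
      · exact ⟨⟨hl, (ihr hr).2 hcr, by simp [hcl]⟩, nofun⟩
      · exact ⟨h.nearlyValid, nofun⟩

end Insert

end RBTree

open RBTree

theorem insert_fixup_terminates_and_correct_general
    {α : Type} [LinearOrder α] (t : RBTree α) (k : α)
    (h23 : Is23RB t) :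
    Is23RB (RBTree.insert k t) ∧
    (∀ x, x ∈ inorder (RBTree.insert k t) ↔ x ∈ inorder t ∨ x = k) ∧
    insertFixupCount k t ≤ height t + 1 := by
  obtain ⟨⟨hblack, hnrr, n, hbh⟩, h2⟩ := h23
  have hvalid : Valid (insAux k t).1 n := (valid_insAux k ⟨hnrr, h2, hbh⟩).2 hblack
  refine ⟨hvalid.is23RB_setBlack, fun x => ?_, (insAux_count_le_height k t).trans (Nat.le_succ _)⟩
  rw [RBTree.insert, inorder_setBlack]
  exact mem_inorder_insAux k t x

/-- Proposition 1: The fix-up phase of the insertion algorithm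
for 2-3 red-black trees terminates (the algorithm is a total function); the
number of fix-up rule applications is bounded by the height of the tree being
fixed (the original tree with the new red leaf attached, whose height is at
most `height t + 1`); and after the fix-up phase and recoloring the root
black, the resulting tree is a valid 2-3 red-black tree whose key set is the
original key set together with the inserted key. -/
theorem insert_fixup_terminates_and_correct
    {α : Type} [LinearOrder α] (t : RBTree α) (k : α)
    (h23 : Is23RB t) (hbst : List.Pairwise (· < ·) (inorder t)) :
    Is23RB (RBTree.insert k t) ∧
    (∀ x, x ∈ inorder (RBTree.insert k t) ↔ x ∈ inorder t ∨ x = k) ∧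
    insertFixupCount k t ≤ height t + 1 :=
  insert_fixup_terminates_and_correct_general t k h23
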